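/- Let H be a graph and let F be the disjoint union of graphs F_1, …, F_k, each on exactly n vertices. Then R(F, H) ≤ max_{i∈[k]} R(F_i, H) + n(k−1). -/

import Mathlib

open SimpleGraph Finset

/-- `G` embeds into `H` (a copy of `G` appears in `H`). -/
def graphEmbeds {V W : Type*} (G : SimpleGraph V) (H : SimpleGraph W) : Prop :=
  ∃ f : V → W, Function.Injective f ∧ ∀ u v, G.Adj u v → H.Adj (f u) (f v)

/-- `N` is large enough for the Ramsey property: every red/blue coloring of `K_N`
(the red graph `R`, blue graph `Rᶜ`) contains a red `G` or a blue `H`. -/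
def isRamsey {V W : Type*} (G : SimpleGraph V) (H : SimpleGraph W) (N : ℕ) : Prop :=
  ∀ R : SimpleGraph (Fin N), graphEmbeds G R ∨ graphEmbeds H Rᶜ

/-- The Ramsey number `R(G,H)`. -/
noncomputable def ramsey {V W : Type*} (G : SimpleGraph V) (H : SimpleGraph W) : ℕ :=
  sInf {N | isRamsey G H N}

/-- `t` disjoint copies of the complete graph `K_m`. -/
def kCliques (t m : ℕ) : SimpleGraph (Fin t × Fin m) where
  Adj x y := x.1 = y.1 ∧ x.2 ≠ y.2
  symm := ⟨fun x y h => ⟨h.1.symm, h.2.symm⟩⟩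
  loopless := ⟨fun x h => h.2 rfl⟩

/-- The chromatic number as a natural number. -/
noncomputable def chromNum {V : Type*} (G : SimpleGraph V) : ℕ := sInf {n | G.Colorable n}

/-- The chromatic surplus: the minimum size of a color class over all proper
colorings with `chromNum G` colors. -/
noncomputable def surplus {V : Type*} [Fintype V] (G : SimpleGraph V) : ℕ :=
  sInf {k | ∃ C : G.Coloring (Fin (chromNum G)), ∃ i : Fin (chromNum G),
    (Finset.univ.filter (fun v => C v = i)).card = k}

/-- `a` is a leaf of `G`: it has a unique neighbor. -/
def IsLeaf {V : Type*} (G : SimpleGraph V) (a : V) : Prop := ∃! w, G.Adj a w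

/-- Stretching: delete a leaf `b` and attach a new vertex (reusing the label `b`)
to the leaf `a`. -/
def isStretch {V : Type*} (T T' : SimpleGraph V) : Prop :=
  ∃ a b : V, a ≠ b ∧ IsLeaf T a ∧ IsLeaf T b ∧
    ∀ x y, T'.Adj x y ↔
      ((T.Adj x y ∧ x ≠ b ∧ y ≠ b) ∨ (x = b ∧ y = a) ∨ (x = a ∧ y = b))

/-- Expanding at a vertex `u` of degree `d` (`2 ≤ d ≤ n-2`) all of whose neighbors
are leaves except `z0`: delete a leaf `b` outside `N[u]` and attach a new vertex
(reusing the label `b`) to `u`. -/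
def isExpand {V : Type*} [Fintype V] (T T' : SimpleGraph V) : Prop :=
  ∃ u b z0 : V, T.Adj u z0 ∧ ¬ IsLeaf T z0 ∧
    (∀ z, T.Adj u z → z ≠ z0 → IsLeaf T z) ∧
    2 ≤ (T.neighborSet u).ncard ∧ (T.neighborSet u).ncard ≤ Fintype.card V - 2 ∧
    IsLeaf T b ∧ b ≠ u ∧ ¬ T.Adj u b ∧
    ∀ x y, T'.Adj x y ↔
      ((T.Adj x y ∧ x ≠ b ∧ y ≠ b) ∨ (x = b ∧ y = u) ∨ (x = u ∧ y = b))

/-- Disjoint union of `K_m` and `K_l`. -/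
def kUnion (m l : ℕ) : SimpleGraph (Fin m ⊕ Fin l) where
  Adj x y := x ≠ y ∧ ((x.isLeft ∧ y.isLeft) ∨ (x.isRight ∧ y.isRight))
  symm := ⟨fun x y h => ⟨h.1.symm, h.2.imp (fun p => ⟨p.2, p.1⟩) (fun p => ⟨p.2, p.1⟩)⟩⟩
  loopless := ⟨fun x h => h.1 rfl⟩

/-- Disjoint union of `k` graphs, each on `Fin n`. -/
def disjUnion {k n : ℕ} (Fs : Fin k → SimpleGraph (Fin n)) :
    SimpleGraph (Fin k × Fin n) where
  Adj x y := x.1 = y.1 ∧ (Fs x.1).Adj x.2 y.2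
  symm := by
    refine ⟨?_⟩
    rintro ⟨i, a⟩ ⟨j, b⟩ ⟨h1, h2⟩
    dsimp at h1 h2 ⊢
    subst h1
    exact ⟨rfl, h2.symm⟩
  loopless := by
    refine ⟨?_⟩
    rintro ⟨i, a⟩ ⟨h1, h2⟩
    exact (Fs i).irrefl h2

/-- Disjoint union of graphs `Fs i` on `Fin (n i)`. -/
def sigmaUnion {r : ℕ} {n : Fin r → ℕ} (Fs : ∀ i, SimpleGraph (Fin (n i))) :
    SimpleGraph (Σ i, Fin (n i)) where
  Adj x y := ∃ (i : Fin r) (a b : Fin (n i)), x = ⟨i, a⟩ ∧ y = ⟨i, b⟩ ∧ (Fs i).Adj a b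
  symm := by
    refine ⟨?_⟩
    rintro x y ⟨i, a, b, hx, hy, h⟩
    exact ⟨i, b, a, hy, hx, h.symm⟩
  loopless := by
    refine ⟨?_⟩
    rintro x ⟨i, a, b, hx, hy, h⟩
    rw [hx] at hy
    obtain ⟨-, hab⟩ := (Sigma.mk.inj_iff).mp hy
    exact (Fs i).irrefl (by cases eq_of_heq hab; exact h)

/-! Fix a colouring with no blue `H`. Then every set of at least `M = max_i R(F_i, H)` vertices
spans a red copy of each `F_i`, so red copies of `F_1, …, F_k` can be found greedily: when `F_i`
is placed, the earlier copies occupy at most `n (k - 1)` vertices, which leaves at least `M`.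
If some `R(F_i, H)` is undefined (`sInf ∅ = 0`), then so is `R(F, H)`, since `F_i ⊑ F`. -/

open scoped SimpleGraph

section Ramsey

variable {V W X : Type*} {G : SimpleGraph V} {H : SimpleGraph W} {N : ℕ}

lemma graphEmbeds_iff_isContained : graphEmbeds G H ↔ G ⊑ H :=
  ⟨fun ⟨f, hf, hadj⟩ => ⟨⟨⟨f, hadj _ _⟩, hf⟩⟩,
    fun ⟨c⟩ => ⟨c, c.injective, fun _ _ => c.toHom.map_adj⟩⟩

lemma isRamsey_iff : isRamsey G H N ↔ ∀ R : SimpleGraph (Fin N), G ⊑ R ∨ H ⊑ Rᶜ := by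
  simp only [isRamsey, graphEmbeds_iff_isContained]

lemma isRamsey.isContained_or_isContained [Fintype X] (h : isRamsey G H N)
    (hN : N ≤ Fintype.card X) (R : SimpleGraph X) : G ⊑ R ∨ H ⊑ Rᶜ := by
  let e : Fin N ↪ X := (Fin.castLEEmb hN).trans (Fintype.equivFin X).symm.toEmbedding
  exact (isRamsey_iff.1 h (R.comap e)).imp
    (·.trans (Embedding.comap e R).isContained)
    (·.trans (Embedding.complEquiv (Embedding.comap e R)).isContained)

lemma isRamsey.mono_right {N' : ℕ} (h : isRamsey G H N) (hN : N ≤ N') : isRamsey G H N' :=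
  isRamsey_iff.2 fun R => h.isContained_or_isContained (by simpa using hN) R

lemma isRamsey.of_isContained {V' : Type*} {G' : SimpleGraph V'} (h : isRamsey G' H N)
    (hG : G ⊑ G') : isRamsey G H N :=
  isRamsey_iff.2 fun R => (isRamsey_iff.1 h R).imp_left hG.trans

lemma isRamsey_ramsey (h : ∃ N, isRamsey G H N) : isRamsey G H (ramsey G H) :=
  Nat.sInf_mem h

lemma ramsey_eq_zero (h : ∀ N, ¬ isRamsey G H N) : ramsey G H = 0 := by
  simp [ramsey, h]

end Ramsey

lemma exists_injOn_copies {ι V : Type*} [DecidableEq ι] [Fintype V] [DecidableEq V] {n M : ℕ}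
    (Fs : ι → SimpleGraph (Fin n)) (R : SimpleGraph V)
    (hR : ∀ i (U : Finset V), M ≤ #U → Fs i ⊑ R.induce (U : Set V))
    {s : Finset ι} (hs : s.Nonempty) (hcard : M + n * (#s - 1) ≤ Fintype.card V) :
    ∃ f : ι × Fin n → V, Set.InjOn f ↑(s ×ˢ (univ : Finset (Fin n))) ∧
      ∀ i ∈ s, ∀ a b, (Fs i).Adj a b → R.Adj (f (i, a)) (f (i, b)) := by
  induction hs using Finset.Nonempty.cons_induction with
  | singleton i =>
    obtain ⟨c⟩ := hR i univ (by simpa using hcard)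
    refine ⟨fun p => c p.2, ?_, ?_⟩
    · rintro ⟨j, a⟩ hp ⟨j', b⟩ hq h
      simp only [coe_product, coe_singleton, coe_univ, Set.mem_prod, Set.mem_singleton_iff,
        Set.mem_univ, and_true] at hp hq
      subst hp hq
      exact congrArg (Prod.mk _) (c.injective (Subtype.ext h))
    · intro j hj a b hab
      rw [mem_singleton] at hj
      subst hj
      exact c.toHom.map_adj hab
  | cons i s hi hs ih =>
    rw [card_cons, Nat.add_sub_cancel] at hcard
    obtain ⟨f, hf, hadj⟩ := ih (le_trans (by gcongr; omega) hcard)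
    set T := (s ×ˢ univ).image f
    have hT : #T ≤ n * #s := card_image_le.trans (by simp [card_product, mul_comm])
    obtain ⟨c⟩ := hR i (univ \ T) (by rw [card_sdiff_of_subset (subset_univ T), card_univ]; omega)
    have hcT : ∀ a, ∀ p ∈ s ×ˢ univ, (c a : V) ≠ f p := fun a p hp h =>
      (mem_sdiff.1 (c a).2).2 (h ▸ mem_image_of_mem f hp)
    refine ⟨fun p => if p.1 = i then c p.2 else f p, ?_, ?_⟩
    · rintro ⟨j, a⟩ hp ⟨j', b⟩ hq h
      simp only [coe_product, coe_cons, coe_univ, Set.mem_prod, Set.mem_insert_iff,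
        Set.mem_univ, and_true, mem_coe] at hp hq
      by_cases hj : j = i <;> by_cases hj' : j' = i <;> simp only [hj, hj', if_true, if_false] at h
      · subst hj hj'
        exact congrArg (Prod.mk _) (c.injective (Subtype.ext h))
      · exact absurd h (hcT a _ (by simpa [hj'] using hq))
      · exact absurd h.symm (hcT b _ (by simpa [hj] using hp))
      · exact hf (by simpa [hj] using hp) (by simpa [hj'] using hq) h
    · intro j hj a b hab
      by_cases hji : j = i
      · subst hji
        simpa using c.toHom.map_adj hab
      · simpa [hji] using hadj j ((mem_cons.1 hj).resolve_left hji) a b hab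

theorem isRamsey_disjUnion {W : Type*} {H : SimpleGraph W} {k n M : ℕ}
    {Fs : Fin k → SimpleGraph (Fin n)} (hM : ∀ i, isRamsey (Fs i) H M) :
    isRamsey (disjUnion Fs) H (M + n * (k - 1)) := by
  refine isRamsey_iff.2 fun R => or_iff_not_imp_right.2 fun hH => ?_
  have hR : ∀ i (U : Finset (Fin (M + n * (k - 1)))), M ≤ #U → Fs i ⊑ R.induce U := fun i U hU =>
    ((hM i).isContained_or_isContained (hU.trans_eq (Fintype.card_coe U).symm)
      (R.induce U)).resolve_right
      fun h => hH (h.trans (Embedding.complEquiv (Embedding.induce (G := R) U)).isContained)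
  rcases k.eq_zero_or_pos with rfl | hk
  · exact .of_isEmpty
  obtain ⟨f, hf, hadj⟩ := exists_injOn_copies Fs R hR (univ_nonempty_iff.2 ⟨⟨0, hk⟩⟩) (by simp)
  refine ⟨⟨⟨f, ?_⟩, fun p q h => hf (by simp) (by simp) h⟩⟩
  rintro ⟨i, a⟩ ⟨j, b⟩ ⟨rfl, hab⟩
  exact hadj i (mem_univ i) a b hab

lemma isContained_disjUnion {k n : ℕ} (Fs : Fin k → SimpleGraph (Fin n)) (i : Fin k) :
    Fs i ⊑ disjUnion Fs :=
  ⟨⟨⟨fun a => (i, a), fun h => ⟨rfl, h⟩⟩, fun _ _ h => (Prod.mk.inj h).2⟩⟩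

/-- Remark 4.2 (first part): for a disjoint union `F` of graphs `F_1,…,F_k`, each on
`n` vertices, `R(F,H) ≤ max_i R(F_i,H) + n(k-1)`. -/
theorem stmt_11 {W : Type*} (H : SimpleGraph W) (k n : ℕ)
    (Fs : Fin k → SimpleGraph (Fin n)) :
    ramsey (disjUnion Fs) H ≤
      (Finset.univ.sup fun i => ramsey (Fs i) H) + n * (k - 1) := by
  by_cases hFs : ∀ i, ∃ N, isRamsey (Fs i) H N
  · refine Nat.sInf_le (isRamsey_disjUnion fun i => ?_)
    exact (isRamsey_ramsey (hFs i)).mono_right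
      (le_sup (f := fun i => ramsey (Fs i) H) (mem_univ i))
  · obtain ⟨i, hi⟩ := not_forall.1 hFs
    rw [ramsey_eq_zero fun N h => hi ⟨N, h.of_isContained (isContained_disjUnion Fs i)⟩]
    exact Nat.zero_le _
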